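/- arXiv:0709.3021 — 4 statements merged into one kernel-verified Lean document; each statement's English description precedes it below -/
import Mathlib

section
/- Let n ≥ 2, let k ≥ 1 be odd, and let R be a commutative ring in which 2 is a nonzerodivisor. Then for every k-th order hypermatrix M : (Fin n)^k → R, the scaled hyperdeterminant DET(M) := ∑_{(σ_1,…,σ_k) ∈ (S_n)^k} sign(σ_1)⋯sign(σ_k) · ∏_{i=1}^n M(σ_1(i),…,σ_k(i)) vanishes: DET(M) = 0. -/
/-- The scaled hyperdeterminant `DET` of a `k`-th order hypermatrix
`M : (Fin k → Fin n) → R`: the sum over all `k`-tuples of permutations of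
`Fin n` of the product of their signs times the corresponding product of
entries of `M`. (Cayley's first hyperdeterminant is `DET M / n!`.) -/
noncomputable def DET {R : Type*} [CommRing R] (n k : ℕ)
    (M : (Fin k → Fin n) → R) : R :=
  ∑ σ : Fin k → Equiv.Perm (Fin n),
    (∏ s, (Equiv.Perm.sign (σ s) : ℤ)) • ∏ i, M (fun s => σ s i)

/-- For `n ≥ 2` and odd `k`, the hyperdeterminant of any `k`-th order
hypermatrix vanishes (over a commutative ring where `2` is a nonzerodivisor). -/
theorem hyperdeterminant_eq_zero_of_odd
    {R : Type*} [CommRing R] (h2 : ∀ r : R, 2 * r = 0 → r = 0)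
    (n k : ℕ) (hn : 2 ≤ n) (hk : 1 ≤ k) (hodd : Odd k)
    (M : (Fin k → Fin n) → R) :
    DET n k M = 0 := by
  have h01 : (⟨0, by omega⟩ : Fin n) ≠ ⟨1, by omega⟩ := by
    simp [Fin.ext_iff]
  set τ : Equiv.Perm (Fin n) := Equiv.swap ⟨0, by omega⟩ ⟨1, by omega⟩ with hτdef
  have hτ : (Equiv.Perm.sign τ : ℤ) = -1 := by
    rw [hτdef, Equiv.Perm.sign_swap h01]; rfl
  have key : DET n k M = -DET n k M := by
    unfold DET
    rw [← Finset.sum_neg_distrib]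
    refine Fintype.sum_equiv (Equiv.piCongrRight fun _ : Fin k => Equiv.mulRight τ)
      (fun σ => (∏ s, (Equiv.Perm.sign (σ s) : ℤ)) • ∏ i, M (fun s => σ s i))
      (fun σ => -((∏ s, (Equiv.Perm.sign (σ s) : ℤ)) • ∏ i, M (fun s => σ s i)))
      fun σ => ?_
    have hsign : ∏ s, (Equiv.Perm.sign (σ s * τ) : ℤ) =
        -∏ s, (Equiv.Perm.sign (σ s) : ℤ) := by
      simp only [map_mul, Units.val_mul, hτ, Finset.prod_mul_distrib,
        Finset.prod_const, Finset.card_univ, Fintype.card_fin, hodd.neg_one_pow]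
      ring
    have hprod : (∏ i, M (fun s => (σ s * τ) i)) = ∏ i, M (fun s => σ s i) := by
      rw [← Equiv.prod_comp τ (fun i => M (fun s => σ s i))]
      rfl
    simp only [Equiv.piCongrRight_apply, Equiv.coe_mulRight, Pi.map_apply]
    rw [hsign, hprod, neg_smul, neg_neg]
  exact h2 (DET n k M) (by rw [two_mul]; exact eq_neg_iff_add_eq_zero.mp key)
end

section
/- Let R be a commutative ring, n, k ≥ 1, M : (Fin n)^k → R a k-th order hypermatrix, and A_1,…,A_k n×n matrices over R. Define the transformed hypermatrix M'(j_1,…,j_k) := ∑_{i_1,…,i_k ∈ Fin n} A_1(j_1,i_1)⋯A_k(j_k,i_k) · M(i_1,…,i_k). Then DET(M') = det(A_1)⋯det(A_k) · DET(M). In particular, the hyperdeterminant is invariant under the action of SL_n(R)^{×k}, i.e. DET(M') = DET(M) whenever det(A_s) = 1 for all s. -/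
lemma aux_det {R : Type*} [CommRing R] {n : ℕ} (A : Matrix (Fin n) (Fin n) R)
    (g : Fin n → Fin n) :
    ∑ π : Equiv.Perm (Fin n), ((Equiv.Perm.sign π : ℤ) : R) * ∏ i, A (π i) (g i)
      = (A.submatrix id g).det := by
  rw [Matrix.det_apply]
  simp [Matrix.submatrix_apply, Units.smul_def, zsmul_eq_mul]

lemma aux_zero {R : Type*} [CommRing R] {n : ℕ} (A : Matrix (Fin n) (Fin n) R)
    {g : Fin n → Fin n} (hg : ¬ Function.Bijective g) :
    (A.submatrix id g).det = 0 := by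
  rw [← Finite.injective_iff_bijective] at hg
  rw [Function.not_injective_iff] at hg
  obtain ⟨i, j, hij, hne⟩ := hg
  exact Matrix.det_zero_of_column_eq hne (fun x => by simp [Matrix.submatrix_apply, hij])

lemma hyperdet_key {R : Type*} [CommRing R] (n k : ℕ)
    (M : (Fin k → Fin n) → R) (A : Fin k → Matrix (Fin n) (Fin n) R) :
    DET n k (fun j => ∑ i : Fin k → Fin n, (∏ s, A s (j s) (i s)) * M i)
        = (∏ s, (A s).det) * DET n k M := by
  classical
  have h1 : DET n k (fun j => ∑ i : Fin k → Fin n, (∏ s, A s (j s) (i s)) * M i)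
      = ∑ τ : Fin k → Fin n → Fin n,
          (∏ s, ((A s).submatrix id (τ s)).det) * ∏ i, M (fun s => τ s i) := by
    rw [DET]
    have step1 : ∀ σ : Fin k → Equiv.Perm (Fin n),
        ((∏ s, (Equiv.Perm.sign (σ s) : ℤ)) •
          ∏ i, ∑ i' : Fin k → Fin n, (∏ s, A s (σ s i) (i' s)) * M i')
        = ∑ G : Fin n → Fin k → Fin n,
            (∏ s, (((Equiv.Perm.sign (σ s) : ℤ) : R) * ∏ i, A s (σ s i) (G i s)))
              * ∏ i, M (G i) := by
      intro σ
      rw [Fintype.prod_sum, Finset.smul_sum]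
      refine Finset.sum_congr rfl fun G _ => ?_
      rw [Finset.prod_mul_distrib, zsmul_eq_mul]
      push_cast
      rw [Finset.prod_mul_distrib]
      rw [Finset.prod_comm (f := fun i s => A s (σ s i) (G i s))]
      ring
    rw [Finset.sum_congr rfl (fun σ _ => step1 σ), Finset.sum_comm]
    -- now : ∑ G, ∑ σ, (∏ s, sign * prod) * ∏ M
    have step2 : ∀ G : Fin n → Fin k → Fin n,
        (∑ σ : Fin k → Equiv.Perm (Fin n),
          (∏ s, (((Equiv.Perm.sign (σ s) : ℤ) : R) * ∏ i, A s (σ s i) (G i s)))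
            * ∏ i, M (G i))
        = (∏ s, ((A s).submatrix id (fun i => G i s)).det) * ∏ i, M (G i) := by
      intro G
      rw [← Finset.sum_mul]
      congr 1
      have hd : ∀ s : Fin k, ((A s).submatrix id fun i => G i s).det
          = ∑ π : Equiv.Perm (Fin n),
              ((Equiv.Perm.sign π : ℤ) : R) * ∏ i, A s (π i) (G i s) :=
        fun s => (aux_det (A s) fun i => G i s).symm
      simp_rw [hd]
      exact (Fintype.prod_sum (fun (s : Fin k) (π : Equiv.Perm (Fin n)) =>
        ((Equiv.Perm.sign π : ℤ) : R) * ∏ i, A s (π i) (G i s))).symm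
    rw [Finset.sum_congr rfl (fun G _ => step2 G)]
    exact Fintype.sum_equiv (Equiv.piComm fun (_ : Fin k) (_ : Fin n) => Fin n).symm
      _ _ (fun G => rfl)
  rw [h1]
  have h2 : (∏ s, (A s).det) * DET n k M
      = ∑ σ : Fin k → Equiv.Perm (Fin n),
          (∏ s, ((A s).submatrix id ⇑(σ s)).det) * ∏ i, M (fun s => σ s i) := by
    rw [DET, Finset.mul_sum]
    refine Finset.sum_congr rfl fun σ _ => ?_
    have : ∀ s, ((A s).submatrix id ⇑(σ s)).det
        = ((Equiv.Perm.sign (σ s) : ℤ) : R) * (A s).det := by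
      intro s; rw [Matrix.det_permute']
    simp_rw [this, Finset.prod_mul_distrib, zsmul_eq_mul]
    push_cast
    ring
  rw [h2]
  -- restrict to bijective tuples
  rw [← Finset.sum_filter_add_sum_filter_not Finset.univ
    (fun τ : Fin k → Fin n → Fin n => ∀ s, Function.Bijective (τ s))]
  have hz : ∑ τ ∈ Finset.univ.filter
      (fun τ : Fin k → Fin n → Fin n => ¬ ∀ s, Function.Bijective (τ s)),
      (∏ s, ((A s).submatrix id (τ s)).det) * ∏ i, M (fun s => τ s i) = 0 := by
    refine Finset.sum_eq_zero fun τ hτ => ?_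
    rw [Finset.mem_filter] at hτ
    push_neg at hτ
    obtain ⟨s, hs⟩ := hτ.2
    rw [Finset.prod_eq_zero (Finset.mem_univ s) (aux_zero (A s) hs), zero_mul]
  rw [hz, add_zero]
  refine Finset.sum_bij' (i := fun τ hτ => fun s =>
      Equiv.ofBijective (τ s) ((Finset.mem_filter.mp hτ).2 s))
    (j := fun σ _ => fun s => ⇑(σ s)) ?_ ?_ ?_ ?_ ?_
  · intro τ hτ; exact Finset.mem_univ _
  · intro σ hσ
    simp only [Finset.mem_filter, Finset.mem_univ, true_and]
    exact fun s => (σ s).bijective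
  · intro τ hτ; funext s; rfl
  · intro σ hσ; funext s; ext x; rfl
  · intro τ hτ; rfl

/-- Multilinear covariance of the hyperdeterminant: if the hypermatrix `M` is
transformed by matrices `A 1, …, A k` acting on the `k` slots, the
hyperdeterminant gets multiplied by the product of the determinants.
In particular, `DET` is invariant under the action of `SL_n(R)^{×k}`. -/
theorem hyperdeterminant_covariance
    {R : Type*} [CommRing R] (n k : ℕ) (hn : 1 ≤ n) (hk : 1 ≤ k)
    (M : (Fin k → Fin n) → R) (A : Fin k → Matrix (Fin n) (Fin n) R) :
    DET n k (fun j => ∑ i : Fin k → Fin n, (∏ s, A s (j s) (i s)) * M i)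
        = (∏ s, (A s).det) * DET n k M ∧
      ((∀ s, (A s).det = 1) →
        DET n k (fun j => ∑ i : Fin k → Fin n, (∏ s, A s (j s) (i s)) * M i)
          = DET n k M) := by
  refine ⟨hyperdet_key n k M A, fun h => ?_⟩
  rw [hyperdet_key n k M A]
  simp [h]
end

section
/- Let n, k, N ≥ 1 and let v = (v_0,…,v_{n−1}) ∈ ℤ^n. Then DET of the 2k-th order hypermatrix with entries Λ^{i_1+⋯+i_{2k}+v_{i_1}}(Y) (indices 0 ≤ i_1,…,i_{2k} ≤ n−1) equals (−1)^{kn(n−1)/2} times DET of the hypermatrix with entries Λ^{i_1+⋯+i_k−(i_{k+1}+⋯+i_{2k})+v_{i_1}+k(n−1)}(Y); equivalently, DET of the Toeplitz-type hypermatrix with entries Λ^{i_1+⋯+i_k−(i_{k+1}+⋯+i_{2k})+v_{i_1}}(Y) equals (−1)^{kn(n−1)/2} times DET of the Hankel-type hypermatrix with entries Λ^{i_1+⋯+i_{2k}+v_{i_1}+k(1−n)}(Y). In terms of the paper's notation: H^k_v(Y) = (−1)^{kn(n−1)/2} T^k_{v+((k(n−1))^n)}(Y) and T^k_v(Y) =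 (−1)^{kn(n−1)/2} H^k_{v+((k(1−n))^n)}(Y). -/
/-- `Λ N p` is the `p`-th elementary symmetric polynomial in `N` variables,
with the convention that it vanishes for `p < 0` (and for `p > N`),
and equals `1` for `p = 0`. -/
noncomputable def Λ (N : ℕ) (p : ℤ) : MvPolynomial (Fin N) ℤ :=
  if 0 ≤ p then MvPolynomial.esymm (Fin N) ℤ p.toNat else 0

/-- The sign pattern of Toeplitz hyperdeterminants: the first `k` indices enter
positively and the last `k` negatively. -/
def toepSign (k : ℕ) (s : Fin (2 * k)) : ℤ := if (s : ℕ) < k then 1 else -1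

/-! Reversing the last `k` indices, `i ↦ n - 1 - i`, turns the Hankel exponent
`i₁ + ⋯ + i₂ₖ` into the Toeplitz exponent `i₁ + ⋯ + iₖ - (iₖ₊₁ + ⋯ + i₂ₖ) + k(n - 1)` and leaves
`i₁`, hence the shift `v_{i₁}`, alone. Composing a slot of `DET` with a permutation multiplies it
by the sign of that permutation, and the reversal of `Fin n` has sign `(-1)^(n choose 2)`, which
gives the factor `(-1)^(k n (n - 1) / 2)`. Nothing about `Λ` is used beyond its being a function
of the exponent. -/

open Finset Equiv

theorem Fin.card_filter_not_val_lt_two_mul (k : ℕ) :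
    #{s : Fin (2 * k) | ¬(s : ℕ) < k} = k := by
  have h := card_filter_add_card_filter_not (s := (univ : Finset (Fin (2 * k))))
    (fun s => (s : ℕ) < k)
  rw [Fin.card_filter_val_lt, card_univ, Fintype.card_fin] at h
  omega

theorem Fin.sign_revPerm (n : ℕ) :
    Perm.sign (Fin.revPerm : Perm (Fin n)) = (-1) ^ n.choose 2 := by
  induction n with
  | zero => rfl
  | succ n ih =>
    have hdecomp : finRotate (n + 1) * Fin.revPerm = Perm.decomposeFin.symm (0, Fin.revPerm) := by
      ext x
      induction x using Fin.cases with
      | zero => simp [Fin.rev_zero, Fin.last_add_one]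
      | succ y => simp [Fin.rev_succ, Fin.coeSucc_eq_succ]
    have hsign := congrArg Perm.sign hdecomp
    rw [map_mul, Perm.decomposeFin.symm_sign, sign_finRotate, ih, if_pos rfl, one_mul,
      Nat.succ_sub_one] at hsign
    rw [Nat.choose_succ_succ, Nat.choose_one_right, pow_add, ← hsign, ← mul_assoc,
      Int.units_mul_self, one_mul]

theorem DET_comp_perm {R : Type*} [CommRing R] (n m : ℕ) (M : (Fin m → Fin n) → R)
    (τ : Fin m → Perm (Fin n)) :
    DET n m (fun i => M (fun s => τ s (i s))) = (∏ s, (Perm.sign (τ s) : ℤ)) • DET n m M := by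
  have hsq : (∏ s, (Perm.sign (τ s) : ℤ)) * ∏ s, (Perm.sign (τ s) : ℤ) = 1 := by
    rw [← prod_mul_distrib, ← prod_const_one]
    exact prod_congr rfl fun s _ => by rw [← Units.val_mul, Int.units_mul_self, Units.val_one]
  rw [DET, DET, smul_sum]
  refine Fintype.sum_equiv (Equiv.piCongrRight fun s => Equiv.mulLeft (τ s)) _ _ fun σ => ?_
  have hsign : (∏ s, (Perm.sign (τ s * σ s) : ℤ))
      = (∏ s, (Perm.sign (τ s) : ℤ)) * ∏ s, (Perm.sign (σ s) : ℤ) := by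
    simp only [map_mul, Units.val_mul, prod_mul_distrib]
  change _ = _ • ((∏ s, (Perm.sign (τ s * σ s) : ℤ)) • ∏ i, M fun s => (τ s * σ s) i)
  rw [hsign, smul_smul, ← mul_assoc, hsq, one_mul]
  rfl

theorem DET_hankel_eq_neg_one_pow_smul_DET_toeplitz {R : Type*} [CommRing R] (n k : ℕ)
    (hk : 0 < k) (F : Fin n → ℤ → R) :
    DET n (2 * k) (fun i => F (i ⟨0, by omega⟩) (∑ s, ((i s : ℕ) : ℤ)))
      = (-1 : ℤ) ^ (k * n.choose 2) • DET n (2 * k) (fun i =>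
          F (i ⟨0, by omega⟩) ((∑ s, toepSign k s * ((i s : ℕ) : ℤ)) + k * ((n : ℤ) - 1))) := by
  let τ : Fin (2 * k) → Perm (Fin n) := fun s => if (s : ℕ) < k then 1 else Fin.revPerm
  have hτ_zero (j : Fin n) : τ ⟨0, by omega⟩ j = j := by simp [τ, hk]
  have htoep (i : Fin (2 * k) → Fin n) :
      (∑ s, toepSign k s * ((τ s (i s) : ℕ) : ℤ)) + k * ((n : ℤ) - 1) = ∑ s, ((i s : ℕ) : ℤ) := by
    have hterm (s : Fin (2 * k)) : toepSign k s * ((τ s (i s) : ℕ) : ℤ)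
        = ((i s : ℕ) : ℤ) - if (s : ℕ) < k then 0 else (n : ℤ) - 1 := by
      by_cases hs : (s : ℕ) < k
      · simp [toepSign, τ, hs]
      · have := (i s).isLt
        simp only [toepSign, τ, hs, if_false, Fin.revPerm_apply, Fin.val_rev]
        omega
    rw [sum_congr rfl fun s _ => hterm s, sum_sub_distrib, sum_ite, sum_const_zero, sum_const,
      Fin.card_filter_not_val_lt_two_mul, nsmul_eq_mul]
    ring
  have hsign : (∏ s, (Perm.sign (τ s) : ℤ)) = (-1) ^ (k * n.choose 2) := by
    have hterm (s : Fin (2 * k)) : (Perm.sign (τ s) : ℤ)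
        = if (s : ℕ) < k then 1 else (-1) ^ n.choose 2 := by
      by_cases hs : (s : ℕ) < k <;> simp [τ, hs, Fin.sign_revPerm]
    rw [prod_congr rfl fun s _ => hterm s, prod_ite, prod_const_one, prod_const, one_mul,
      Fin.card_filter_not_val_lt_two_mul, ← pow_mul, mul_comm]
  rw [← hsign, ← DET_comp_perm]
  simp only [hτ_zero, htoep]

/-- Relation between shifted Hankel and Toeplitz hyperdeterminants:
`H^k_v(Y) = (−1)^{kn(n−1)/2} T^k_{v+((k(n−1))^n)}(Y)` and
`T^k_v(Y) = (−1)^{kn(n−1)/2} H^k_{v+((k(1−n))^n)}(Y)`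
(stated for the `n!`-scaled hyperdeterminants `DET`). -/
theorem hankel_toeplitz_relation (n k N : ℕ) (hk : 1 ≤ k) (v : Fin n → ℤ) :
    (DET n (2 * k) (fun i => Λ N ((∑ s, ((i s : ℕ) : ℤ)) + v (i ⟨0, by omega⟩)))
        = (-1 : ℤ) ^ (k * (n * (n - 1) / 2)) •
          DET n (2 * k) (fun i =>
            Λ N ((∑ s, toepSign k s * ((i s : ℕ) : ℤ)) + (v (i ⟨0, by omega⟩)
              + (k : ℤ) * ((n : ℤ) - 1)))))
      ∧ (DET n (2 * k) (fun i =>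
            Λ N ((∑ s, toepSign k s * ((i s : ℕ) : ℤ)) + v (i ⟨0, by omega⟩)))
          = (-1 : ℤ) ^ (k * (n * (n - 1) / 2)) •
            DET n (2 * k) (fun i =>
              Λ N ((∑ s, ((i s : ℕ) : ℤ)) + (v (i ⟨0, by omega⟩)
                + (k : ℤ) * (1 - (n : ℤ)))))) := by
  rw [← Nat.choose_two_right]
  constructor
  · convert DET_hankel_eq_neg_one_pow_smul_DET_toeplitz n k hk (fun j p => Λ N (p + v j))
      using 5
    ring
  · have h := DET_hankel_eq_neg_one_pow_smul_DET_toeplitz n k hk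
      (fun j p => Λ N (p + (v j + k * (1 - n))))
    have hshift (i : Fin (2 * k) → Fin n) : Λ N ((∑ s, toepSign k s * ((i s : ℕ) : ℤ))
        + k * ((n : ℤ) - 1) + (v (i ⟨0, by omega⟩) + k * (1 - n)))
        = Λ N ((∑ s, toepSign k s * ((i s : ℕ) : ℤ)) + v (i ⟨0, by omega⟩)) := by
      congr 1
      ring
    simp only [hshift] at h
    rw [h, smul_smul, ← pow_add, ← two_mul, pow_mul, neg_one_sq, one_pow, one_smul]
end

section
/- Let n ≥ 1, m ≥ 0, and 0 ≤ l ≤ n. Then, as an identity in MvPolynomial (Fin n) ℤ: (x_1 x_2 ⋯ x_n)^m · Λ^l(X) · det(x_i^{n−j})_{1≤i,j≤n} = det( x_i^{ν_j + n − j} )_{1≤i,j≤n}, where ν_j = m+1 for 1 ≤ j ≤ l and ν_j = m for l < j ≤ n. Equivalently, Λ^n(X)^m · Λ^l(X) = S_{(m^n)+(1^l)}(X), i.e. the product of the m-th power of the top elementary symmetric polynomial with the l-th elementary symmetric polynomial is the Schur polynomial of the near-rectangular shape (m^n)+(1^l). -/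
/-!
Adjoin an indeterminate `t` to `x₁, …, xₙ` and expand the `(n+1)`-alternant
`det (y_i ^ (n - j))`, `y = (t, x₁, …, xₙ)`, in two ways: as a Vandermonde product it is
`∏ (t - xᵢ) · Δ(X)`, and by Laplace expansion along the row of `t` the coefficient of
`t ^ (n - l)` is `± det (xᵢ ^ (n - σ(j)))`, where `σ` skips column `l`, i.e. the exponents
of the first `l` columns go up by one. Comparing coefficients of `t ^ (n - l)` gives
`Λ^l(X) · Δ(X) = det (xᵢ ^ ([j < l] + n - 1 - j))`; multiplying row `i` by `xᵢ ^ m` adds `m`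
to every exponent.
-/

open Finset

theorem Fin.sub_val_succAbove_mk {n l : ℕ} (hl : l < n + 1) (k : Fin n) :
    n - ((⟨l, hl⟩ : Fin (n + 1)).succAbove k : ℕ)
      = (if (k : ℕ) < l then 1 else 0) + (n - 1 - k) := by
  have := k.isLt
  simp only [Fin.succAbove, Fin.lt_def, Fin.val_castSucc]
  split_ifs <;> simp <;> omega

namespace Matrix

variable {R : Type*} [CommRing R] {n : ℕ}

theorem det_of_pow_rev_eq_prod (u : Fin n → R) :
    (of fun i j : Fin n => u i ^ (n - 1 - (j : ℕ))).det
      = ∏ i, ∏ j ∈ Ioi i, (u i - u j) := by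
  have hrev : (of fun i j : Fin n => u i ^ (n - 1 - (j : ℕ)))
      = (vandermonde (u ∘ Fin.rev)).submatrix Fin.revPerm Fin.revPerm := by
    ext i j
    simp only [of_apply, submatrix_apply, vandermonde_apply, Function.comp_apply,
      Fin.revPerm_apply, Fin.rev_rev, Fin.val_rev]
    congr 1
    omega
  rw [hrev, det_submatrix_equiv_self, det_vandermonde, prod_sigma', prod_sigma']
  exact prod_nbij' (fun p => ⟨p.2.rev, p.1.rev⟩) (fun p => ⟨p.2.rev, p.1.rev⟩)
    (by simp) (by simp) (by simp) (by simp) (by simp)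

theorem det_of_cons_pow_rev_eq_prod_mul (t : R) (u : Fin n → R) :
    (of fun i j : Fin (n + 1) => (Fin.cons t u : Fin (n + 1) → R) i ^ (n - (j : ℕ))).det
      = (∏ i, (t - u i)) * (of fun i j : Fin n => u i ^ (n - 1 - (j : ℕ))).det := by
  have h := det_of_pow_rev_eq_prod (Fin.cons t u : Fin (n + 1) → R)
  rw [add_tsub_cancel_right] at h
  rw [h, Fin.prod_univ_succ, Fin.prod_Ioi_zero, det_of_pow_rev_eq_prod]
  simp [Fin.prod_Ioi_succ]

theorem det_of_cons_pow_rev_eq_sum (t : R) (u : Fin n → R) :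
    (of fun i j : Fin (n + 1) => (Fin.cons t u : Fin (n + 1) → R) i ^ (n - (j : ℕ))).det
      = ∑ j : Fin (n + 1), (-1) ^ (j : ℕ) * t ^ (n - (j : ℕ)) *
          (of fun i k : Fin n => u i ^ (n - (j.succAbove k : ℕ))).det := by
  rw [det_succ_row_zero]
  rfl

open Polynomial in
theorem esymm_mul_det_of_pow_rev (u : Fin n → R) {l : ℕ} (hl : l ≤ n) :
    (univ.val.map u).esymm l * (of fun i j : Fin n => u i ^ (n - 1 - (j : ℕ))).det
      = (of fun i j : Fin n =>
          u i ^ ((if (j : ℕ) < l then 1 else 0) + (n - 1 - (j : ℕ)))).det := by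
  have hC : ∀ f : Fin n → Fin n → R, (of fun i j => C (f i j)).det = C (of f).det :=
    fun f => (RingHom.map_det C (of f)).symm
  have hterm : ∀ (c : R) (j k : ℕ), (-1 : R[X]) ^ j * X ^ k * C c = C ((-1) ^ j * c) * X ^ k :=
    fun c j k => by simp only [map_mul, map_pow, map_neg, map_one]; ring
  have key := congrArg (coeff · (n - l))
    ((det_of_cons_pow_rev_eq_prod_mul (X : R[X]) (C ∘ u)).symm.trans
      (det_of_cons_pow_rev_eq_sum X (C ∘ u)))
  simp only [Function.comp_apply, ← map_pow, hC, hterm, finsetSum_coeff, coeff_C_mul_X_pow]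
    at key
  have hprod : ∏ i, (X - C (u i)) = ((univ.val.map u).map fun t => X - C t).prod := by
    rw [Multiset.map_map]; rfl
  rw [hprod, coeff_mul_C, Multiset.prod_X_sub_C_coeff _ (by simp), sum_eq_single ⟨l, by omega⟩,
    if_pos rfl] at key
  · simp only [Multiset.card_map, card_val, card_univ, Fintype.card_fin,
      tsub_tsub_cancel_of_le hl, mul_assoc] at key
    rw [(isUnit_neg_one.pow l).mul_left_cancel key]
    simp only [Fin.sub_val_succAbove_mk]
  · intro j _ hj
    refine if_neg fun h => hj (Fin.ext ?_)
    have := j.isLt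
    simp only at h ⊢
    omega
  · simp

theorem det_of_pow_add_left (u : Fin n → R) (m : ℕ) (e : Fin n → ℕ) :
    (of fun i j : Fin n => u i ^ (m + e j)).det
      = (∏ i, u i) ^ m * (of fun i j => u i ^ e j).det := by
  simp only [pow_add]
  exact (det_mul_column (fun i => u i ^ m) (of fun i j => u i ^ e j)).trans (by rw [prod_pow])

end Matrix

theorem esymm_pow_mul_esymm_eq_schur_general (n m l : ℕ) (hl : l ≤ n) :
    (∏ i : Fin n, MvPolynomial.X i) ^ m * MvPolynomial.esymm (Fin n) ℤ l *
        (Matrix.of fun i j : Fin n =>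
          (MvPolynomial.X i : MvPolynomial (Fin n) ℤ) ^ (n - 1 - (j : ℕ))).det
      = (Matrix.of fun i j : Fin n =>
          MvPolynomial.X i ^
            ((if (j : ℕ) < l then m + 1 else m) + (n - 1 - (j : ℕ)))).det := by
  have hexp : ∀ j : Fin n, (if (j : ℕ) < l then m + 1 else m) + (n - 1 - (j : ℕ))
      = m + ((if (j : ℕ) < l then 1 else 0) + (n - 1 - (j : ℕ))) := by
    intro j
    split_ifs <;> omega
  rw [MvPolynomial.esymm_eq_multiset_esymm, mul_assoc, Matrix.esymm_mul_det_of_pow_rev _ hl]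
  simp only [hexp, Matrix.det_of_pow_add_left]

/-- `Λ^n(X)^m ⋅ Λ^l(X) = S_{(m^n)+(1^l)}(X)`: the product of the `m`-th power
of the top elementary symmetric polynomial with the `l`-th elementary
symmetric polynomial is the Schur polynomial of the near-rectangular shape
`ν = (m+1, …, m+1, m, …, m)` (`l` parts equal to `m+1`), in the alternant form
`(x_1⋯x_n)^m ⋅ Λ^l(X) ⋅ det(x_i^{n−j}) = det(x_i^{ν_j+n−j})`. -/
theorem esymm_pow_mul_esymm_eq_schur (n m l : ℕ) (hn : 1 ≤ n) (hl : l ≤ n) :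
    (∏ i : Fin n, MvPolynomial.X i) ^ m * MvPolynomial.esymm (Fin n) ℤ l *
        (Matrix.of fun i j : Fin n =>
          (MvPolynomial.X i : MvPolynomial (Fin n) ℤ) ^ (n - 1 - (j : ℕ))).det
      = (Matrix.of fun i j : Fin n =>
          MvPolynomial.X i ^
            ((if (j : ℕ) < l then m + 1 else m) + (n - 1 - (j : ℕ)))).det :=
  esymm_pow_mul_esymm_eq_schur_general n m l hl
end
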